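/- arXiv:1811.08054 — 2 statements merged into one kernel-verified Lean document; each statement's English description precedes it below -/
import Mathlib

section
/- Let K be a field of characteristic zero and J ⊆ K[x₁,…,xₙ] an ideal. Let P be a K-linear differential operator on K[x] such that P(gⱼ) ∈ √J for a generating set g₁,…,g_μ of J, and such that for every variable xᵢ the commutator [P, xᵢ] maps all of J into √J. Then P maps all of J into √J. -/
open MvPolynomial

/-
Write `[P, x](h) = P(x h) - x P(h)`. Since `P(x h) = x P(h) + [P, x](h)`, the set of `h ∈ J` with
`P(h)` in a fixed ideal `L` (here `√J`) is stable under multiplication by each algebra generator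
`x`, hence by the whole algebra, so it is an ideal; containing the generators of `J`, it is `J`.
-/

section

variable {K A : Type*} [CommSemiring K] [CommRing A] [Algebra K A]
  {P : A →ₗ[K] A} {I L : Ideal A}

theorem mul_mem_of_commutator_mem_of_adjoin_eq_top {s : Set A} (hs : Algebra.adjoin K s = ⊤)
    (hcomm : ∀ x ∈ s, ∀ h ∈ I, P (x * h) - x * P h ∈ L) (a : A) :
    ∀ h ∈ I, P h ∈ L → P (a * h) ∈ L := by
  have ha : a ∈ Algebra.adjoin K s := hs ▸ Algebra.mem_top
  induction ha using Algebra.adjoin_induction with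
  | mem x hx =>
    intro h hh hPh
    rw [← sub_add_cancel (P (x * h)) (x * P h)]
    exact L.add_mem (hcomm x hx h hh) (L.mul_mem_left x hPh)
  | algebraMap r =>
    intro h _ hPh
    rw [← Algebra.smul_def, map_smul, Algebra.smul_def]
    exact L.mul_mem_left _ hPh
  | add x y _ _ ihx ihy =>
    intro h hh hPh
    rw [add_mul, map_add]
    exact L.add_mem (ihx h hh hPh) (ihy h hh hPh)
  | mul x y _ _ ihx ihy =>
    intro h hh hPh
    rw [mul_assoc]
    exact ihx (y * h) (I.mul_mem_left y hh) (ihy h hh hPh)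

theorem map_mem_of_span_of_mul_mem {S : Set A} (hI : I = Ideal.span S) (hS : ∀ x ∈ S, P x ∈ L)
    (hmul : ∀ a, ∀ h ∈ I, P h ∈ L → P (a * h) ∈ L) : ∀ h ∈ I, P h ∈ L := by
  subst hI
  intro h hh
  induction hh using Submodule.span_induction with
  | mem x hx => exact hS x hx
  | zero => simp
  | add x y _ _ ihx ihy => exact map_add P x y ▸ L.add_mem ihx ihy
  | smul a x hx ihx => exact hmul a x hx ihx

end

theorem maps_ideal_to_radical_of_generators_and_commutators_general
    (K : Type*) [Field K] (n μ : ℕ)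
    (g : Fin μ → MvPolynomial (Fin n) K)
    (J : Ideal (MvPolynomial (Fin n) K))
    (hJ : J = Ideal.span (Set.range g))
    (P : MvPolynomial (Fin n) K →ₗ[K] MvPolynomial (Fin n) K)
    (hgen : ∀ j, P (g j) ∈ J.radical)
    (hcomm : ∀ (i : Fin n), ∀ h ∈ J, P (X i * h) - X i * P h ∈ J.radical) :
    ∀ h ∈ J, P h ∈ J.radical := by
  refine map_mem_of_span_of_mul_mem hJ (Set.forall_mem_range.2 hgen) ?_
  exact mul_mem_of_commutator_mem_of_adjoin_eq_top (adjoin_range_X (R := K))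
    (Set.forall_mem_range.2 hcomm)

theorem maps_ideal_to_radical_of_generators_and_commutators
    (K : Type*) [Field K] [CharZero K] (n μ : ℕ)
    (g : Fin μ → MvPolynomial (Fin n) K)
    (J : Ideal (MvPolynomial (Fin n) K))
    (hJ : J = Ideal.span (Set.range g))
    (P : MvPolynomial (Fin n) K →ₗ[K] MvPolynomial (Fin n) K)
    (hgen : ∀ j, P (g j) ∈ J.radical)
    (hcomm : ∀ (i : Fin n), ∀ h ∈ J, P (X i * h) - X i * P h ∈ J.radical) :
    ∀ h ∈ J, P h ∈ J.radical :=
  maps_ideal_to_radical_of_generators_and_commutators_general K n μ g J hJ P hgen hcomm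
end

section
/- Let K be a field of characteristic zero and consider operators on K[x,y] generated by multiplication operators and ∂_x, ∂_y. For J = ⟨f₁, f₂⟩ with f₁ = (x²−2)(x⁴−4x²−y⁴−5y³−9y²−7y+2) and f₂ = x⁴−4x²−y³−3y²−3y+3: the radical is √J = ⟨x²−2, y+1⟩, and dim_K K[x,y]/√J = 2. -/
/-!
With `u = x² - 2` and `v = y + 1` the generators read `f₂ = u² - v³` and `f₁ = u (f₂ - v⁴)`. Hence
`v⁷ = (u² - v⁴) f₂ - u f₁ ∈ J` and `u² ≡ v³ (mod J)`, so `√J = √⟨u, v⟩`. The quotient by `⟨u, v⟩` is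
`ℚ[x]/(x² - 2) ≅ ℚ(√2)`, a field of degree 2 over `ℚ`; so `⟨u, v⟩` is maximal, in particular radical.
-/

open MvPolynomial
open scoped Polynomial

theorem Rat.sq_ne_two (b : ℚ) : b ^ 2 ≠ 2 := fun h ↦
  Rat.isSquare_ofNat_iff.not.2 Nat.prime_two.not_isSquare ⟨b, by rw [← h, sq]⟩

theorem Ideal.radical_span_pair_eq_radical_span {A : Type*} [CommRing A] (u v : A) :
    (Ideal.span {u * (u ^ 2 - v ^ 4 - v ^ 3), u ^ 2 - v ^ 3}).radical =
      (Ideal.span {u, v}).radical := by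
  set J := Ideal.span {u * (u ^ 2 - v ^ 4 - v ^ 3), u ^ 2 - v ^ 3}
  refine le_antisymm (Ideal.radical_mono ?_) (Ideal.radical_le_radical_iff.2 ?_)
  · rw [Ideal.span_le, Set.insert_subset_iff, Set.singleton_subset_iff]
    exact ⟨Ideal.mem_span_pair.2 ⟨u ^ 2 - v ^ 4 - v ^ 3, 0, by ring⟩,
      Ideal.mem_span_pair.2 ⟨u, -v ^ 2, by ring⟩⟩
  have hv : v ∈ J.radical := ⟨7, Ideal.mem_span_pair.2 ⟨-u, u ^ 2 - v ^ 4, by ring⟩⟩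
  have hu : u ∈ J.radical := by
    rw [← Ideal.radical_idem]
    refine ⟨2, ?_⟩
    rw [show u ^ 2 = (u ^ 2 - v ^ 3) + v ^ 3 by ring]
    exact add_mem (Ideal.le_radical (Ideal.subset_span (by simp)))
      (J.radical.pow_mem_of_mem hv 3 (by norm_num))
  rw [Ideal.span_le, Set.insert_subset_iff, Set.singleton_subset_iff]
  exact ⟨hu, hv⟩

namespace MvPolynomial

section

variable {K : Type*} [CommRing K] (p : K[X]) (c : K)

noncomputable abbrev spanAevalXSubC : Ideal (MvPolynomial (Fin 2) K) :=
  Ideal.span {Polynomial.aeval (X 0) p, X 1 - C c}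

noncomputable def toAdjoinRoot : MvPolynomial (Fin 2) K →ₐ[K] AdjoinRoot p :=
  aeval ![AdjoinRoot.root p, algebraMap K _ c]

@[simp]
theorem toAdjoinRoot_X_zero : toAdjoinRoot p c (X 0) = AdjoinRoot.root p := by
  simp [toAdjoinRoot]

@[simp]
theorem toAdjoinRoot_X_one : toAdjoinRoot p c (X 1) = algebraMap K _ c := by
  simp [toAdjoinRoot]

theorem spanAevalXSubC_le_ker : spanAevalXSubC p c ≤ RingHom.ker (toAdjoinRoot p c) := by
  rw [Ideal.span_le, Set.insert_subset_iff, Set.singleton_subset_iff]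
  refine ⟨?_, ?_⟩ <;> simp [← Polynomial.aeval_algHom_apply]

-- In the `eval₂` form that `AdjoinRoot.liftAlgHom` expects, so that `liftAlgHom_root` fires in `simp`.
theorem eval₂_mk_X_zero :
    p.eval₂ (Algebra.ofId K (MvPolynomial (Fin 2) K ⧸ spanAevalXSubC p c) : K →+* _)
      (Ideal.Quotient.mk (spanAevalXSubC p c) (X 0)) = 0 := by
  rw [← Ideal.Quotient.mkₐ_eq_mk K, Algebra.toRingHom_ofId, ← Polynomial.aeval_def,
    Polynomial.aeval_algHom_apply, Ideal.Quotient.mkₐ_eq_mk, Ideal.Quotient.eq_zero_iff_mem]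
  exact Ideal.subset_span (by simp)

theorem mk_X_one_eq_algebraMap :
    Ideal.Quotient.mk (spanAevalXSubC p c) (X 1) = algebraMap K _ c := by
  rw [← sub_eq_zero, ← Ideal.Quotient.mk_algebraMap, algebraMap_eq, ← map_sub,
    Ideal.Quotient.eq_zero_iff_mem]
  exact Ideal.subset_span (by simp)

noncomputable def quotientToAdjoinRoot :
    (MvPolynomial (Fin 2) K ⧸ spanAevalXSubC p c) →ₐ[K] AdjoinRoot p :=
  Ideal.Quotient.liftₐ _ (toAdjoinRoot p c) fun _ h ↦
    RingHom.mem_ker.1 (spanAevalXSubC_le_ker p c h)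

@[simp]
theorem quotientToAdjoinRoot_mk (a : MvPolynomial (Fin 2) K) :
    quotientToAdjoinRoot p c (Ideal.Quotient.mk _ a) = toAdjoinRoot p c a :=
  rfl

noncomputable def adjoinRootToQuotient :
    AdjoinRoot p →ₐ[K] (MvPolynomial (Fin 2) K ⧸ spanAevalXSubC p c) :=
  AdjoinRoot.liftAlgHom p (Algebra.ofId K _) _ (eval₂_mk_X_zero p c)

@[simp]
theorem adjoinRootToQuotient_root :
    adjoinRootToQuotient p c (AdjoinRoot.root p) = Ideal.Quotient.mk _ (X 0) :=
  AdjoinRoot.liftAlgHom_root _ _ _ _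

noncomputable def quotientSpanAevalXSubCAlgEquiv :
    (MvPolynomial (Fin 2) K ⧸ spanAevalXSubC p c) ≃ₐ[K] AdjoinRoot p :=
  AlgEquiv.ofAlgHom (quotientToAdjoinRoot p c) (adjoinRootToQuotient p c)
    (AdjoinRoot.algHom_ext (by simp))
    (Ideal.Quotient.algHom_ext K (MvPolynomial.algHom_ext fun i ↦ by
      fin_cases i <;> simp [mk_X_one_eq_algebraMap, -AdjoinRoot.algebraMap_eq]))

end

section

variable {K : Type*} [Field K] {p : K[X]}

theorem isMaximal_spanAevalXSubC (hp : Irreducible p) (c : K) :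
    (spanAevalXSubC p c).IsMaximal :=
  have := Fact.mk hp
  Ideal.Quotient.maximal_of_isField _ <|
    (quotientSpanAevalXSubCAlgEquiv p c).toMulEquiv.isField (Field.toIsField _)

theorem finrank_quotient_spanAevalXSubC (hp : p ≠ 0) (c : K) :
    Module.finrank K (MvPolynomial (Fin 2) K ⧸ spanAevalXSubC p c) = p.natDegree := by
  rw [(quotientSpanAevalXSubCAlgEquiv p c).toLinearEquiv.finrank_eq,
    (AdjoinRoot.powerBasis hp).finrank, AdjoinRoot.powerBasis_dim]

end

end MvPolynomial

theorem example_radical_and_dimension :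
    letI x : MvPolynomial (Fin 2) ℚ := X 0
    letI y : MvPolynomial (Fin 2) ℚ := X 1
    letI f₁ : MvPolynomial (Fin 2) ℚ :=
      (x^2 - 2) * (x^4 - 4*x^2 - y^4 - 5*y^3 - 9*y^2 - 7*y + 2)
    letI f₂ : MvPolynomial (Fin 2) ℚ := x^4 - 4*x^2 - y^3 - 3*y^2 - 3*y + 3
    letI J : Ideal (MvPolynomial (Fin 2) ℚ) := Ideal.span {f₁, f₂}
    letI R : Ideal (MvPolynomial (Fin 2) ℚ) := Ideal.span {x^2 - 2, y + 1}
    J.radical = R ∧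
      Module.finrank ℚ (MvPolynomial (Fin 2) ℚ ⧸ R) = 2 := by
  have hirr : Irreducible (Polynomial.X ^ 2 - Polynomial.C 2 : ℚ[X]) :=
    X_pow_sub_C_irreducible_of_prime Nat.prime_two Rat.sq_ne_two
  have hR : Ideal.span {X 0 ^ 2 - 2, X 1 + 1} =
      spanAevalXSubC (Polynomial.X ^ 2 - Polynomial.C 2 : ℚ[X]) (-1) := by
    simp [spanAevalXSubC, map_ofNat C]
  have hmax : (Ideal.span {X 0 ^ 2 - 2, X 1 + 1} : Ideal (MvPolynomial (Fin 2) ℚ)).IsMaximal :=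
    hR ▸ isMaximal_spanAevalXSubC hirr (-1)
  refine ⟨?_, ?_⟩
  · rw [← hmax.isPrime.radical, ← Ideal.radical_span_pair_eq_radical_span (X 0 ^ 2 - 2) (X 1 + 1)]
    congr 4 <;> ring
  · rw [hR, finrank_quotient_spanAevalXSubC hirr.ne_zero, Polynomial.natDegree_X_pow_sub_C]
end
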